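/- If the set B of base units is finite, then every closed conversion is finitely generated: for every unit conversion C with C = C*, there exists a finite unit conversion F ⊆ C with C = F*. -/
import Mathlib


open Finsupp

/-- The positive rationals, as a multiplicative group. -/
abbrev Ratio : Type := {q : ℚ // 0 < q}

/-- Prefixes: the free abelian group over base prefixes `P`. -/
abbrev PrefG (P : Type*) : Type _ := P →₀ ℤ
/-- Root units: the free abelian group over base units `B`. -/
abbrev RootG (B : Type*) : Type _ := B →₀ ℤ
/-- Units: the free abelian group over preunits (prefix, base unit). -/
abbrev UnitG (P B : Type*) : Type _ := ((P →₀ ℤ) × B) →₀ ℤ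

variable {P B D : Type*}

/-- The root of a unit: forget all prefixes. -/
noncomputable def rootU (u : UnitG P B) : RootG B :=
  Finsupp.mapDomain Prod.snd u

/-- Embed a root unit back into the units, with empty prefixes. -/
noncomputable def unrootU (f : RootG B) : UnitG P B :=
  Finsupp.mapDomain (fun b => ((0 : PrefG P), b)) f

/-- Strip all prefixes from a unit. -/
noncomputable def stripU (u : UnitG P B) : UnitG P B := unrootU (rootU u)

/-- The value of a prefix, given values of base prefixes. -/
noncomputable def valP (val₀ : P → Ratio) (f : PrefG P) : Ratio :=
  ∏ p ∈ f.support, val₀ p ^ (f p)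

/-- The prefix value of a unit. -/
noncomputable def pvalU (val₀ : P → Ratio) (g : UnitG P B) : Ratio :=
  ∏ x ∈ g.support, valP val₀ x.1 ^ (g x)

/-- The dimension of a root unit, given dimensions of base units. -/
noncomputable def dimRoot (dim₀ : B → D →₀ ℤ) (f : RootG B) : D →₀ ℤ :=
  ∑ b ∈ f.support, f b • dim₀ b

/-- The dimension of a unit. -/
noncomputable def dimU (dim₀ : B → D →₀ ℤ) (u : UnitG P B) : D →₀ ℤ :=
  dimRoot dim₀ (rootU u)

/-- The combined prefix of a unit. -/
noncomputable def prefU (u : UnitG P B) : PrefG P :=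
  ∑ x ∈ u.support, u x • x.1

/-- Normalization of a unit. -/
noncomputable def normU (u : UnitG P B) : PrefG P × RootG B :=
  (prefU u, rootU u)

/-- Evaluation of a unit. -/
noncomputable def evalU (val₀ : P → Ratio) (u : UnitG P B) : Ratio × RootG B :=
  (pvalU val₀ u, rootU u)

/-- A unit conversion: dimensionally consistent and functional in the ratio. -/
def IsConversion (dim₀ : B → D →₀ ℤ) (C : Set (UnitG P B × Ratio × UnitG P B)) : Prop :=
  (∀ u r v, (u, r, v) ∈ C → dimU dim₀ u = dimU dim₀ v) ∧
  (∀ u r r' v, (u, r, v) ∈ C → (u, r', v) ∈ C → r = r')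

/-- The closure rules for unit conversions. -/
inductive ClosureRel {P B : Type*} (val₀ : P → Ratio)
    (C : Set (UnitG P B × Ratio × UnitG P B)) :
    UnitG P B → Ratio → UnitG P B → Prop
  | base {u r v} : (u, r, v) ∈ C → ClosureRel val₀ C u r v
  | mul {u r v u' r' v'} : ClosureRel val₀ C u r v → ClosureRel val₀ C u' r' v' →
      ClosureRel val₀ C (u + u') (r * r') (v + v')
  | inv {u r v} : ClosureRel val₀ C u r v → ClosureRel val₀ C (-u) r⁻¹ (-v)
  | pe (u : UnitG P B) : ClosureRel val₀ C u (pvalU val₀ u) (stripU u)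
  | pe' (u : UnitG P B) : ClosureRel val₀ C (stripU u) (pvalU val₀ u)⁻¹ u

/-- The conversion closure: the smallest relation containing `C` closed under the rules. -/
def convClosure (val₀ : P → Ratio) (C : Set (UnitG P B × Ratio × UnitG P B)) :
    Set (UnitG P B × Ratio × UnitG P B) :=
  {t | ClosureRel val₀ C t.1 t.2.1 t.2.2}

/-- Convertibility with respect to a conversion. -/
def Convertible (C : Set (UnitG P B × Ratio × UnitG P B)) (u v : UnitG P B) : Prop :=
  ∃ r, (u, r, v) ∈ C

/-- Coherence with respect to a conversion. -/
def Coherent (C : Set (UnitG P B × Ratio × UnitG P B)) (u v : UnitG P B) : Prop :=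
  (u, (1 : Ratio), v) ∈ C

/-- The unit `δu₀` corresponding to a base unit. -/
noncomputable def deltaB (P : Type*) {B : Type*} (u₀ : B) : UnitG P B :=
  Finsupp.single ((0 : PrefG P), u₀) 1

/-- A defining conversion: basic and functional in its first component. -/
def IsDefining (C : Set (UnitG P B × Ratio × UnitG P B)) : Prop :=
  (∀ u r v, (u, r, v) ∈ C → ∃ u₀ : B, u = deltaB P u₀) ∧
  (∀ u r v r' v', (u, r, v) ∈ C → (u, r', v') ∈ C → v = v')

/-- One-step dependency between base units. -/
def Depends (C : Set (UnitG P B × Ratio × UnitG P B)) (u₀ v₀ : B) : Prop :=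
  ∃ r v, (deltaB P u₀, r, v) ∈ C ∧ v₀ ∈ (rootU v).support

/-- The dependency order `>_C`. -/
def DepOrd (C : Set (UnitG P B × Ratio × UnitG P B)) : B → B → Prop :=
  Relation.TransGen (Depends C)

/-- The domain of a defining conversion. -/
def domC (C : Set (UnitG P B × Ratio × UnitG P B)) : Set B :=
  {u₀ : B | ∃ r v, (deltaB P u₀, r, v) ∈ C}


/-- Definition expansion. -/
noncomputable def xpd (C : Set (UnitG P B × Ratio × UnitG P B)) (u₀ : B) :
    Ratio × UnitG P B :=
  haveI := Classical.propDecidable (∃ rv : Ratio × UnitG P B, (deltaB P u₀, rv.1, rv.2) ∈ C)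
  if h : ∃ rv : Ratio × UnitG P B, (deltaB P u₀, rv.1, rv.2) ∈ C then h.choose
  else (1, deltaB P u₀)

/-- The base rewriting map. -/
noncomputable def rwrB (val₀ : P → Ratio) (C : Set (UnitG P B × Ratio × UnitG P B))
    (u₀ : B) : Ratio × RootG B :=
  ((xpd C u₀).1 * pvalU val₀ (xpd C u₀).2, rootU (xpd C u₀).2)

/-- One rewriting step on evaluated units. -/
noncomputable def rwrStep (val₀ : P → Ratio) (C : Set (UnitG P B × Ratio × UnitG P B)) :
    Ratio × RootG B → Ratio × RootG B :=
  fun p => (p.1 * ∏ b ∈ p.2.support, (rwrB val₀ C b).1 ^ (p.2 b),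
            ∑ b ∈ p.2.support, p.2 b • (rwrB val₀ C b).2)


section AuxLemmas

variable {P' B' : Type*} (val₀' : P' → Ratio)

lemma ratio_zpow_zero (a : Ratio) : a ^ (0 : ℤ) = 1 :=
  Subtype.ext (zpow_zero _)

lemma ratio_zpow_add (a : Ratio) (m n : ℤ) : a ^ (m + n) = a ^ m * a ^ n :=
  Subtype.ext (zpow_add₀ (ne_of_gt a.2) m n)

lemma ratio_one_zpow (n : ℤ) : (1 : Ratio) ^ n = 1 :=
  Subtype.ext (one_zpow n)

lemma valP_zero' : valP val₀' (0 : PrefG P') = 1 := by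
  simp [valP]

lemma pvalU_prod' (g : UnitG P' B') :
    pvalU val₀' g = g.prod fun x n => valP val₀' x.1 ^ n := rfl

lemma pvalU_zero' : pvalU val₀' (0 : UnitG P' B') = 1 := by
  simp [pvalU]

lemma pvalU_add' (u v : UnitG P' B') :
    pvalU val₀' (u + v) = pvalU val₀' u * pvalU val₀' v := by
  rw [pvalU_prod', pvalU_prod', pvalU_prod']
  exact Finsupp.prod_add_index' (fun a => ratio_zpow_zero _) (fun a b₁ b₂ => ratio_zpow_add _ _ _)

lemma pvalU_neg' (u : UnitG P' B') : pvalU val₀' (-u) = (pvalU val₀' u)⁻¹ := by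
  have h : pvalU val₀' (-u) * pvalU val₀' u = 1 := by
    rw [← pvalU_add', neg_add_cancel, pvalU_zero']
  exact eq_inv_of_mul_eq_one_left h

lemma rootU_zero' : rootU (0 : UnitG P' B') = 0 := Finsupp.mapDomain_zero

lemma rootU_add' (u v : UnitG P' B') : rootU (u + v) = rootU u + rootU v :=
  Finsupp.mapDomain_add

lemma rootU_neg' (u : UnitG P' B') : rootU (-u) = - rootU u := by
  unfold rootU
  exact map_neg (Finsupp.mapDomain.addMonoidHom Prod.snd) u

lemma rootU_sub' (u v : UnitG P' B') : rootU (u - v) = rootU u - rootU v := by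
  rw [sub_eq_add_neg, sub_eq_add_neg, rootU_add', rootU_neg']

lemma rootU_unrootU' (f : RootG B') : rootU (P := P') (unrootU f) = f := by
  unfold rootU unrootU
  rw [← Finsupp.mapDomain_comp]
  have : (Prod.snd ∘ fun b => ((0 : PrefG P'), b)) = (id : B' → B') := rfl
  rw [this, Finsupp.mapDomain_id]

lemma stripU_stripU' (u : UnitG P' B') : stripU (stripU u) = stripU u := by
  unfold stripU
  rw [rootU_unrootU']

lemma stripU_zero' : stripU (0 : UnitG P' B') = 0 := by
  unfold stripU unrootU
  rw [rootU_zero', Finsupp.mapDomain_zero]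

lemma pvalU_unrootU' (f : RootG B') : pvalU val₀' (unrootU f : UnitG P' B') = 1 := by
  classical
  unfold pvalU
  apply Finset.prod_eq_one
  intro x hx
  have hsub : (unrootU f : UnitG P' B').support ⊆
      f.support.image (fun b => ((0 : PrefG P'), b)) := Finsupp.mapDomain_support
  obtain ⟨b, _, rfl⟩ := Finset.mem_image.mp (hsub hx)
  simp [valP_zero', ratio_one_zpow]

lemma pvalU_stripU' (u : UnitG P' B') : pvalU val₀' (stripU u) = 1 :=
  pvalU_unrootU' val₀' (rootU u)

/-- The kernel lemma: if two units have the same root, they are related by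
their prefix values in any conversion closure. -/
lemma kernel_closureRel (C₀ : Set (UnitG P' B' × Ratio × UnitG P' B'))
    {u v : UnitG P' B'} (h : rootU u = rootU v) :
    ClosureRel val₀' C₀ u (pvalU val₀' u * (pvalU val₀' v)⁻¹) v := by
  have h1 := ClosureRel.pe (val₀ := val₀') (C := C₀) u
  have h2 := ClosureRel.pe' (val₀ := val₀') (C := C₀) v
  have h3 := ClosureRel.inv (ClosureRel.pe (val₀ := val₀') (C := C₀) (stripU u))
  have h4 := ClosureRel.mul (ClosureRel.mul h1 h2) h3
  have hsv : stripU v = stripU u := by unfold stripU; rw [h]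
  have e1 : u + stripU v + -(stripU u) = u := by rw [hsv]; abel
  have e2 : stripU u + v + -(stripU (stripU u)) = v := by rw [stripU_stripU']; abel
  have e3 : pvalU val₀' u * (pvalU val₀' v)⁻¹ * (pvalU val₀' (stripU u))⁻¹
      = pvalU val₀' u * (pvalU val₀' v)⁻¹ := by rw [pvalU_stripU']; simp
  rw [e1, e2, e3] at h4
  exact h4

end AuxLemmas

/-- If `B` is finite, every closed conversion is finitely generated. -/
theorem closed_finitely_generated {P B D : Type*} [Finite B] (val₀ : P → Ratio)
    (dim₀ : B → D →₀ ℤ) (C : Set (UnitG P B × Ratio × UnitG P B))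
    (hC : IsConversion dim₀ C) (hcl : C = convClosure val₀ C) :
    ∃ F : Set (UnitG P B × Ratio × UnitG P B),
      F ⊆ C ∧ F.Finite ∧ IsConversion dim₀ F ∧ C = convClosure val₀ F := by
  classical
  -- closure facts for C
  have hmemC : ∀ {u r v}, ClosureRel val₀ C u r v → (u, r, v) ∈ C := by
    intro u r v h
    rw [hcl]
    exact h
  have hCadd : ∀ {u r v u' r' v'}, (u, r, v) ∈ C → (u', r', v') ∈ C →
      (u + u', r * r', v + v') ∈ C :=
    fun h h' => hmemC (ClosureRel.mul (ClosureRel.base h) (ClosureRel.base h'))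
  have hCneg : ∀ {u r v}, (u, r, v) ∈ C → (-u, r⁻¹, -v) ∈ C :=
    fun h => hmemC (ClosureRel.inv (ClosureRel.base h))
  have hCzero : ((0 : UnitG P B), (1 : Ratio), (0 : UnitG P B)) ∈ C := by
    have := hmemC (ClosureRel.pe (C := C) 0)
    simpa [pvalU_zero', stripU_zero'] using this
  -- the subgroup W of root differences realized by C
  let W : AddSubgroup (RootG B) :=
    { carrier := {w | ∃ u r v, (u, r, v) ∈ C ∧ rootU v - rootU u = w}
      zero_mem' := ⟨0, 1, 0, hCzero, by rw [rootU_zero', sub_zero]⟩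
      add_mem' := by
        rintro w w' ⟨u, r, v, hm, rfl⟩ ⟨u', r', v', hm', rfl⟩
        exact ⟨u + u', r * r', v + v', hCadd hm hm',
          by rw [rootU_add', rootU_add']; abel⟩
      neg_mem' := by
        rintro w ⟨u, r, v, hm, rfl⟩
        exact ⟨-u, r⁻¹, -v, hCneg hm, by rw [rootU_neg', rootU_neg']; abel⟩ }
  -- W is finitely generated, since B is finite
  haveI : IsNoetherian ℤ (RootG B) := isNoetherian_of_isNoetherianRing_of_finite ℤ _
  obtain ⟨T, hT⟩ := IsNoetherian.noetherian (AddSubgroup.toIntSubmodule W)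
  -- lift the generators to triples in C
  have hTW : ∀ w ∈ T, ∃ u r v, (u, r, v) ∈ C ∧ rootU v - rootU u = w := by
    intro w hw
    have hwW : w ∈ W := by
      have : w ∈ Submodule.span ℤ (↑T : Set (RootG B)) :=
        Submodule.subset_span hw
      rw [hT] at this
      exact this
    exact hwW
  choose pu pr pv hpmem hproot using hTW
  -- the finite generating conversion
  let F : Set (UnitG P B × Ratio × UnitG P B) :=
    Set.range (fun x : {w // w ∈ T} => (pu x.1 x.2, pr x.1 x.2, pv x.1 x.2))
  have hFC : F ⊆ C := by
    rintro t ⟨x, rfl⟩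
    exact hpmem x.1 x.2
  have hFfin : F.Finite := Set.finite_range _
  -- closure of F is contained in C
  have hFclC : ∀ {u r v}, ClosureRel val₀ F u r v → (u, r, v) ∈ C := by
    intro u r v h
    induction h with
    | base h => exact hFC h
    | mul h1 h2 ih1 ih2 => exact hCadd ih1 ih2
    | inv h ih => exact hCneg ih
    | pe u => exact hmemC (ClosureRel.pe u)
    | pe' u => exact hmemC (ClosureRel.pe' u)
  -- the subgroup of root differences realized by both C and the closure of F
  let QG : AddSubgroup (RootG B) :=
    { carrier := {w | ∃ u r v, ClosureRel val₀ F u r v ∧ (u, r, v) ∈ C ∧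
        rootU v - rootU u = w}
      zero_mem' := ⟨0, 1, 0, by
          have := ClosureRel.pe (val₀ := val₀) (C := F) 0
          rwa [pvalU_zero', stripU_zero'] at this,
        hCzero, by rw [rootU_zero', sub_zero]⟩
      add_mem' := by
        rintro w w' ⟨u, r, v, hf, hm, rfl⟩ ⟨u', r', v', hf', hm', rfl⟩
        exact ⟨u + u', r * r', v + v', ClosureRel.mul hf hf', hCadd hm hm',
          by rw [rootU_add', rootU_add']; abel⟩
      neg_mem' := by
        rintro w ⟨u, r, v, hf, hm, rfl⟩
        exact ⟨-u, r⁻¹, -v, ClosureRel.inv hf, hCneg hm,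
          by rw [rootU_neg', rootU_neg']; abel⟩ }
  have hWQ : W ≤ QG := by
    intro w hw
    have hspan : Submodule.span ℤ (↑T : Set (RootG B)) ≤
        AddSubgroup.toIntSubmodule QG := by
      rw [Submodule.span_le]
      intro w' hw'
      exact ⟨pu w' hw', pr w' hw', pv w' hw',
        ClosureRel.base ⟨⟨w', hw'⟩, rfl⟩, hpmem w' hw', hproot w' hw'⟩
    have : w ∈ Submodule.span ℤ (↑T : Set (RootG B)) := by
      rw [hT]
      exact hw
    exact hspan this
  refine ⟨F, hFC, hFfin,
    ⟨fun u r v h => hC.1 u r v (hFC h),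
     fun u r r' v h h' => hC.2 u r r' v (hFC h) (hFC h')⟩, ?_⟩
  apply subset_antisymm
  · rintro ⟨u, r, v⟩ hm
    have hwW : rootU v - rootU u ∈ W := ⟨u, r, v, hm, rfl⟩
    obtain ⟨u', r', v', hF', hC', he⟩ := hWQ hwW
    -- he : rootU v' - rootU u' = rootU v - rootU u
    have e : rootU v - rootU v' = rootU u - rootU u' := by
      have h0 : rootU v - rootU v' - (rootU u - rootU u') =
          (rootU v - rootU u) - (rootU v' - rootU u') := by abel
      rw [← he, sub_self] at h0
      exact sub_eq_zero.mp h0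
    have hk : rootU (u - u') = rootU (v - v') := by
      rw [rootU_sub', rootU_sub', e]
    have hkC : (u - u', r * r'⁻¹, v - v') ∈ C := by
      have := hCadd hm (hCneg hC')
      simpa [sub_eq_add_neg] using this
    have hker := hmemC (kernel_closureRel val₀ C hk)
    have hrr : r * r'⁻¹ = pvalU val₀ (u - u') * (pvalU val₀ (v - v'))⁻¹ :=
      hC.2 _ _ _ _ hkC hker
    have hkF : ClosureRel val₀ F (u - u') (r * r'⁻¹) (v - v') := by
      rw [hrr]
      exact kernel_closureRel val₀ F hk
    have hfin := ClosureRel.mul hF' hkF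
    have e1 : u' + (u - u') = u := by abel
    have e2 : v' + (v - v') = v := by abel
    have e3 : r' * (r * r'⁻¹) = r := by
      rw [mul_comm r r'⁻¹, ← mul_assoc, mul_inv_cancel, one_mul]
    rw [e1, e2, e3] at hfin
    exact hfin
  · rintro ⟨u, r, v⟩ h
    exact hFclC h
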